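/- Under the minority-voter setup, if instead p > (q(1+2ε) + 4c(ε−δ))/(1−2ε), then for all sufficiently large n, P(voter i ∈ H₂ predicts a₂) ≥ 1 − 2·exp(−2√(n−1)), and P(every voter in H₂ predicts a₂) ≥ 1 − (1 + 2ε)·n·exp(−2√(n−1)). -/
import Mathlib


open MeasureTheory ProbabilityTheory Finset
open scoped ENNReal

set_option maxHeartbeats 1000000

lemma exp_le_quad {x : ℝ} (hx : |x| ≤ 1) : Real.exp x ≤ 1 + x + x ^ 2 := by
  have h := Real.exp_bound hx (by norm_num : 0 < 2)
  have hs : ∑ i ∈ range 2, x ^ i / i.factorial = 1 + x := by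
    simp [Finset.sum_range_succ]
  rw [hs] at h
  norm_num at h
  have := abs_le.1 h
  nlinarith [sq_nonneg x, this.2]

lemma base_pow_le {r σ : ℝ} (hr0 : 0 ≤ r) (hr1 : r ≤ 1) (hσ : |σ| ≤ 1) (m : ℕ) :
    (r * Real.exp σ + (1 - r)) ^ m ≤ Real.exp ((m : ℝ) * (r * (σ + σ ^ 2))) := by
  have h1 : r * Real.exp σ + (1 - r) ≤ 1 + r * (σ + σ ^ 2) := by
    have := exp_le_quad hσ
    nlinarith
  have h0 : 0 ≤ r * Real.exp σ + (1 - r) := by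
    have := Real.exp_pos σ; nlinarith
  have h2 : (r * Real.exp σ + (1 - r)) ^ m ≤ (1 + r * (σ + σ ^ 2)) ^ m :=
    pow_le_pow_left₀ h0 h1 m
  have h3 : (1 + r * (σ + σ ^ 2)) ^ m ≤ Real.exp (r * (σ + σ ^ 2)) ^ m := by
    apply pow_le_pow_left₀
    · nlinarith [Real.exp_pos σ, sq_nonneg σ]
    · have := Real.add_one_le_exp (r * (σ + σ ^ 2)); linarith
  calc (r * Real.exp σ + (1 - r)) ^ m ≤ Real.exp (r * (σ + σ ^ 2)) ^ m := le_trans h2 h3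
    _ = Real.exp ((m : ℝ) * (r * (σ + σ ^ 2))) := by rw [← Real.exp_nat_mul]

lemma pmf_event_le {Ω : Type} [MeasurableSpace Ω] (μ : Measure Ω) (N : Ω → ℕ) (m : ℕ)
    (f : ℕ → ℝ) (hf : ∀ k, 0 ≤ f k)
    (hpmf : ∀ k, μ {ω | N ω = k} = ENNReal.ofReal (f k))
    (hsupp : ∀ k, m < k → f k = 0)
    (P : ℕ → Prop) (w : ℕ → ℝ) (hw0 : ∀ k, 0 ≤ w k) (hw1 : ∀ k, P k → 1 ≤ w k) :
    μ {ω | P (N ω)} ≤ ENNReal.ofReal (∑ k ∈ range (m + 1), f k * w k) := by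
  have hsub : {ω | P (N ω)} ⊆ ⋃ k : ℕ, {ω | N ω = k ∧ P k} := by
    intro ω hω; exact Set.mem_iUnion.2 ⟨N ω, rfl, hω⟩
  have h1 : μ {ω | P (N ω)} ≤ ∑' k : ℕ, μ {ω | N ω = k ∧ P k} :=
    le_trans (measure_mono hsub) (measure_iUnion_le _)
  have h2 : ∀ k, μ {ω | N ω = k ∧ P k} ≤ ENNReal.ofReal (f k * w k) := by
    intro k
    by_cases hPk : P k
    · have : {ω | N ω = k ∧ P k} = {ω | N ω = k} := by ext ω; simp [hPk]
      rw [this, hpmf k]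
      exact ENNReal.ofReal_le_ofReal (by nlinarith [hf k, hw1 k hPk, hw0 k])
    · have : {ω | N ω = k ∧ P k} = ∅ := by ext ω; simp [hPk]
      rw [this]; simp
  have h3 : (∑' k : ℕ, μ {ω | N ω = k ∧ P k}) ≤
      ∑' k : ℕ, ENNReal.ofReal (f k * w k) := ENNReal.tsum_le_tsum h2
  have h4 : (∑' k : ℕ, ENNReal.ofReal (f k * w k)) =
      ∑ k ∈ range (m + 1), ENNReal.ofReal (f k * w k) := by
    apply tsum_eq_sum
    intro k hk
    have hk' : m < k := by
      by_contra hle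
      exact hk (Finset.mem_range.2 (by omega))
    rw [hsupp k hk']; simp
  have h5 : (∑ k ∈ range (m + 1), ENNReal.ofReal (f k * w k)) =
      ENNReal.ofReal (∑ k ∈ range (m + 1), f k * w k) :=
    (ENNReal.ofReal_sum_of_nonneg (fun k _ => mul_nonneg (hf k) (hw0 k))).symm
  calc μ {ω | P (N ω)} ≤ _ := h1
    _ ≤ _ := h3
    _ = _ := by rw [h4, h5]

section
variable {Ω : Type} [MeasurableSpace Ω] (μ : Measure Ω)

lemma binom_f_nonneg (m : ℕ) {r : ℝ} (hr0 : 0 ≤ r) (hr1 : r ≤ 1) (k : ℕ) :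
    0 ≤ (m.choose k : ℝ) * r ^ k * (1 - r) ^ (m - k) := by
  have : (0:ℝ) ≤ 1 - r := by linarith
  positivity

lemma binom_f_supp (m : ℕ) (r : ℝ) (k : ℕ) (hk : m < k) :
    (m.choose k : ℝ) * r ^ k * (1 - r) ^ (m - k) = 0 := by
  rw [Nat.choose_eq_zero_of_lt hk]; simp

lemma binom_upper_tail (N : Ω → ℕ) (m : ℕ) {r : ℝ} (hr0 : 0 ≤ r) (hr1 : r ≤ 1)
    (hpmf : ∀ k, μ {ω | N ω = k} =
      ENNReal.ofReal ((m.choose k : ℝ) * r ^ k * (1 - r) ^ (m - k)))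
    (a s : ℝ) (hs0 : 0 ≤ s) (hs1 : s ≤ 1) :
    μ {ω | a ≤ (N ω : ℝ)} ≤
      ENNReal.ofReal (Real.exp (-(s * a) + (m : ℝ) * r * s + (m : ℝ) * r * s ^ 2)) := by
  set f : ℕ → ℝ := fun k => (m.choose k : ℝ) * r ^ k * (1 - r) ^ (m - k) with hfdef
  set w : ℕ → ℝ := fun k => Real.exp s ^ k * Real.exp (-(s * a)) with hwdef
  have hw0 : ∀ k, 0 ≤ w k := fun k => by positivity
  have hw1 : ∀ k : ℕ, a ≤ (k : ℝ) → 1 ≤ w k := by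
    intro k hk
    have : w k = Real.exp ((k : ℝ) * s + -(s * a)) := by
      rw [hwdef]; simp only []
      rw [← Real.exp_nat_mul, ← Real.exp_add]
    rw [this]
    apply Real.one_le_exp
    nlinarith
  have h := pmf_event_le μ N m f (binom_f_nonneg m hr0 hr1) hpmf
    (binom_f_supp m r) (fun k => a ≤ (k : ℝ)) w hw0 hw1
  refine le_trans h (ENNReal.ofReal_le_ofReal ?_)
  have key : ∑ k ∈ range (m + 1), f k * w k =
      Real.exp (-(s * a)) * (r * Real.exp s + (1 - r)) ^ m := by
    rw [add_pow, Finset.mul_sum]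
    apply Finset.sum_congr rfl
    intro k _
    show (m.choose k : ℝ) * r ^ k * (1 - r) ^ (m - k) * (Real.exp s ^ k * Real.exp (-(s * a)))
      = Real.exp (-(s * a)) * ((r * Real.exp s) ^ k * (1 - r) ^ (m - k) * (m.choose k : ℝ))
    rw [mul_pow]; ring
  rw [key]
  calc Real.exp (-(s * a)) * (r * Real.exp s + (1 - r)) ^ m
      ≤ Real.exp (-(s * a)) * Real.exp ((m : ℝ) * (r * (s + s ^ 2))) := by
        apply mul_le_mul_of_nonneg_left _ (Real.exp_pos _).le
        exact base_pow_le hr0 hr1 (abs_le.2 ⟨by linarith, hs1⟩) m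
    _ = Real.exp (-(s * a) + (m : ℝ) * r * s + (m : ℝ) * r * s ^ 2) := by
        rw [← Real.exp_add]; congr 1; ring

lemma binom_lower_tail (N : Ω → ℕ) (m : ℕ) {r : ℝ} (hr0 : 0 ≤ r) (hr1 : r ≤ 1)
    (hpmf : ∀ k, μ {ω | N ω = k} =
      ENNReal.ofReal ((m.choose k : ℝ) * r ^ k * (1 - r) ^ (m - k)))
    (a s : ℝ) (hs0 : 0 ≤ s) (hs1 : s ≤ 1) :
    μ {ω | (N ω : ℝ) ≤ a} ≤
      ENNReal.ofReal (Real.exp (s * a - (m : ℝ) * r * s + (m : ℝ) * r * s ^ 2)) := by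
  set f : ℕ → ℝ := fun k => (m.choose k : ℝ) * r ^ k * (1 - r) ^ (m - k) with hfdef
  set w : ℕ → ℝ := fun k => Real.exp (-s) ^ k * Real.exp (s * a) with hwdef
  have hw0 : ∀ k, 0 ≤ w k := fun k => by positivity
  have hw1 : ∀ k : ℕ, (k : ℝ) ≤ a → 1 ≤ w k := by
    intro k hk
    have : w k = Real.exp ((k : ℝ) * (-s) + s * a) := by
      rw [hwdef]; simp only []
      rw [← Real.exp_nat_mul, ← Real.exp_add]
    rw [this]
    apply Real.one_le_exp
    nlinarith
  have h := pmf_event_le μ N m f (binom_f_nonneg m hr0 hr1) hpmf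
    (binom_f_supp m r) (fun k => (k : ℝ) ≤ a) w hw0 hw1
  refine le_trans h (ENNReal.ofReal_le_ofReal ?_)
  have key : ∑ k ∈ range (m + 1), f k * w k =
      Real.exp (s * a) * (r * Real.exp (-s) + (1 - r)) ^ m := by
    rw [add_pow, Finset.mul_sum]
    apply Finset.sum_congr rfl
    intro k _
    show (m.choose k : ℝ) * r ^ k * (1 - r) ^ (m - k) * (Real.exp (-s) ^ k * Real.exp (s * a))
      = Real.exp (s * a) * ((r * Real.exp (-s)) ^ k * (1 - r) ^ (m - k) * (m.choose k : ℝ))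
    rw [mul_pow]; ring
  rw [key]
  calc Real.exp (s * a) * (r * Real.exp (-s) + (1 - r)) ^ m
      ≤ Real.exp (s * a) * Real.exp ((m : ℝ) * (r * (-s + (-s) ^ 2))) := by
        apply mul_le_mul_of_nonneg_left _ (Real.exp_pos _).le
        exact base_pow_le hr0 hr1 (abs_le.2 ⟨by linarith, by linarith⟩) m
    _ = Real.exp (s * a - (m : ℝ) * r * s + (m : ℝ) * r * s ^ 2) := by
        rw [← Real.exp_add]; congr 1; ring
end

lemma prob_ge_of_compl_le {Ω : Type} [MeasurableSpace Ω] {μ : Measure Ω}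
    [IsProbabilityMeasure μ] {A : Set Ω} (hA : MeasurableSet A) {x : ℝ} (hx : 0 ≤ x)
    (h : μ Aᶜ ≤ ENNReal.ofReal x) : ENNReal.ofReal (1 - x) ≤ μ A := by
  have h1 : ENNReal.ofReal (1 - x) = 1 - ENNReal.ofReal x := by
    rw [ENNReal.ofReal_sub _ hx, ENNReal.ofReal_one]
  have h2 : μ Aᶜ = 1 - μ A := by
    rw [measure_compl hA (measure_ne_top μ A), measure_univ]
  have h3 : (1 : ℝ≥0∞) - ENNReal.ofReal x ≤ 1 - μ Aᶜ := tsub_le_tsub_left h 1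
  rw [h2, ENNReal.sub_sub_cancel ENNReal.one_ne_top prob_le_one] at h3
  rw [h1]; exact h3

/-- Influential media, minority voters, high-surprise case: if
p > (q(1+2ε) + 4c(ε−δ))/(1−2ε), then for all sufficiently large n, each minority
voter predicts a₂ with probability at least 1 − 2 exp(−2√(n−1)), and all minority
voters predict a₂ simultaneously with probability at least 1 − (1+2ε) n exp(−2√(n−1)). -/
theorem minority_voters_surprised (ε c δ p q : ℝ)
    (hε : ε ∈ Set.Ioo (0:ℝ) (1/2)) (hc : 0 < c)
    (hp : p ∈ Set.Ioo (0:ℝ) 1) (hq : q ∈ Set.Ioo (0:ℝ) 1)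
    (hcond : p > (q * (1 + 2*ε) + 4*c*(ε - δ)) / (1 - 2*ε)) :
    ∃ n₀ : ℕ, 2 ≤ n₀ ∧ ∀ n : ℕ, n₀ ≤ n → ∀ m1 m2 : ℕ, 1 ≤ m2 →
      (m1 : ℝ) = n * (1/2 + ε) → (m2 : ℝ) = n * (1/2 - ε) →
      ∀ (Ω : Type) [MeasurableSpace Ω] (μ : Measure Ω), IsProbabilityMeasure μ →
      ∀ N1 N2 : Fin m2 → Ω → ℕ, (∀ i, Measurable (N1 i)) → (∀ i, Measurable (N2 i)) →
      (∀ i, ∀ k : ℕ, μ {ω | N1 i ω = k} =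
        ENNReal.ofReal (m1.choose k * q ^ k * (1 - q) ^ (m1 - k))) →
      (∀ i, ∀ k : ℕ, μ {ω | N2 i ω = k} =
        ENNReal.ofReal ((m2 - 1).choose k * p ^ k * (1 - p) ^ (m2 - 1 - k))) →
      (∀ i, IndepFun (N1 i) (N2 i) μ) →
      (∀ i : Fin m2,
        ENNReal.ofReal (1 - 2 * Real.exp (-2 * Real.sqrt ((n : ℝ) - 1))) ≤
          μ {ω | 2*c*(n : ℝ)*(ε - δ) - 1 ≤ (N2 i ω : ℝ) - (N1 i ω : ℝ)}) ∧
      ENNReal.ofReal (1 - (1 + 2*ε) * (n : ℝ) * Real.exp (-2 * Real.sqrt ((n : ℝ) - 1))) ≤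
        μ {ω | ∀ i : Fin m2, 2*c*(n : ℝ)*(ε - δ) - 1 ≤ (N2 i ω : ℝ) - (N1 i ω : ℝ)} := by
  obtain ⟨hε0, hε2⟩ := hε
  obtain ⟨hp0, hp1⟩ := hp
  obtain ⟨hq0, hq1⟩ := hq
  have h2ε : (0:ℝ) < 1 - 2*ε := by linarith
  set γ : ℝ := (1 - 2*ε)*p - (1 + 2*ε)*q - 4*c*(ε - δ) with hγdef
  have hγ : 0 < γ := by
    have := (div_lt_iff₀ h2ε).1 hcond
    rw [hγdef]; nlinarith
  set s : ℝ := min (γ/8) 1 with hsdef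
  have hs0 : 0 < s := lt_min (by positivity) one_pos
  have hs1 : s ≤ 1 := min_le_right _ _
  have hsγ : s ≤ γ/8 := min_le_left _ _
  set K : ℝ := s * γ / 8 with hKdef
  have hK0 : 0 < K := by rw [hKdef]; positivity
  refine ⟨max 2 (⌈(2/K)^2⌉₊ + 2), le_max_left _ _, ?_⟩
  intro n hn m1 m2 hm2 hm1e hm2e Ω _ μ hμ N1 N2 hN1m hN2m hpmf1 hpmf2 _
  -- basic facts about n
  have hn2 : 2 ≤ n := le_trans (le_max_left _ _) hn
  have hnc : ((2/K)^2 : ℝ) ≤ (n : ℝ) := by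
    have h1 : (⌈(2/K)^2⌉₊ + 2 : ℕ) ≤ n := le_trans (le_max_right _ _) hn
    have h2 := Nat.le_ceil ((2/K)^2 : ℝ)
    have h3 : ((⌈(2/K)^2⌉₊ : ℕ) : ℝ) ≤ (n : ℝ) := by exact_mod_cast le_trans (Nat.le_add_right _ 2) h1
    linarith
  have hn0 : (0:ℝ) ≤ (n:ℝ) := Nat.cast_nonneg n
  have hnK : 2 * Real.sqrt ((n:ℝ) - 1) ≤ K * n := by
    have hsq1 : Real.sqrt ((n:ℝ) - 1) ≤ Real.sqrt n := Real.sqrt_le_sqrt (by linarith)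
    have hsq2 : 2/K ≤ Real.sqrt n := by
      have := Real.sqrt_le_sqrt hnc
      rwa [Real.sqrt_sq (by positivity : (0:ℝ) ≤ 2/K)] at this
    have hmul : Real.sqrt (n:ℝ) * Real.sqrt (n:ℝ) = (n:ℝ) := Real.mul_self_sqrt hn0
    have hsq2' : 2 ≤ K * Real.sqrt n := by
      rw [div_le_iff₀ hK0] at hsq2; linarith
    nlinarith [Real.sqrt_nonneg ((n:ℝ)), hK0,
      mul_le_mul_of_nonneg_right hsq2' (Real.sqrt_nonneg (n:ℝ))]
  set E : ℝ := Real.exp (-2 * Real.sqrt ((n:ℝ) - 1)) with hEdef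
  have hE0 : 0 < E := Real.exp_pos _
  set θ : ℝ := 2*c*(n:ℝ)*(ε - δ) - 1 with hθdef
  set a1 : ℝ := (m1:ℝ)*q + (n:ℝ)*γ/4 with ha1def
  set a2 : ℝ := ((m2 - 1 : ℕ):ℝ)*p - (n:ℝ)*γ/4 with ha2def
  have hm2c : ((m2 - 1 : ℕ):ℝ) = (n:ℝ)*(1/2 - ε) - 1 := by
    rw [Nat.cast_sub hm2, hm2e]; norm_num
  have hm2r : (1:ℝ) ≤ (m2:ℝ) := by exact_mod_cast hm2
  -- per-voter tail bounds
  have tail1 : ∀ i, μ {ω | a1 ≤ (N1 i ω : ℝ)} ≤ ENNReal.ofReal E := by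
    intro i
    refine le_trans (binom_upper_tail μ (N1 i) m1 hq0.le hq1.le (hpmf1 i) a1 s hs0.le hs1)
      (ENNReal.ofReal_le_ofReal ?_)
    rw [hEdef]
    apply Real.exp_le_exp.2
    have hm1q : (m1:ℝ)*q ≤ (n:ℝ) := by rw [hm1e]; nlinarith
    have h1 : (m1:ℝ)*q*s^2 ≤ (n:ℝ)*s^2 := by nlinarith [sq_nonneg s]
    rw [ha1def]
    have h2 : (n:ℝ)*s*(γ/8 - s) ≥ 0 := by
      apply mul_nonneg (mul_nonneg hn0 hs0.le); linarith
    nlinarith [hnK]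
  have tail2 : ∀ i, μ {ω | (N2 i ω : ℝ) ≤ a2} ≤ ENNReal.ofReal E := by
    intro i
    refine le_trans (binom_lower_tail μ (N2 i) (m2 - 1) hp0.le hp1.le (hpmf2 i) a2 s hs0.le hs1)
      (ENNReal.ofReal_le_ofReal ?_)
    rw [hEdef]
    apply Real.exp_le_exp.2
    have hmp : ((m2 - 1 : ℕ):ℝ)*p ≤ (n:ℝ) := by
      rw [hm2c]
      have : (0:ℝ) ≤ (n:ℝ)*(1/2 - ε) - 1 := by rw [← hm2e]; linarith
      nlinarith
    have h1 : ((m2 - 1 : ℕ):ℝ)*p*s^2 ≤ (n:ℝ)*s^2 := by nlinarith [sq_nonneg s]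
    rw [ha2def]
    have h2 : (n:ℝ)*s*(γ/8 - s) ≥ 0 := by
      apply mul_nonneg (mul_nonneg hn0 hs0.le); linarith
    nlinarith [hnK]
  -- gap arithmetic
  have hgap : a2 - a1 = θ + 1 - p := by
    rw [ha2def, ha1def, hθdef, hm1e, hm2c, hγdef]; ring
  -- per-voter bad event bound
  have bad : ∀ i : Fin m2,
      μ ({ω | θ ≤ (N2 i ω : ℝ) - (N1 i ω : ℝ)}ᶜ) ≤ ENNReal.ofReal (2*E) := by
    intro i
    have hsub : {ω | θ ≤ (N2 i ω : ℝ) - (N1 i ω : ℝ)}ᶜ ⊆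
        {ω | a1 ≤ (N1 i ω : ℝ)} ∪ {ω | (N2 i ω : ℝ) ≤ a2} := by
      intro ω hω
      simp only [Set.mem_compl_iff, Set.mem_setOf_eq, not_le] at hω
      rcases le_or_gt a1 ((N1 i ω : ℝ)) with h | h
      · exact Or.inl h
      · rcases le_or_gt ((N2 i ω : ℝ)) a2 with h' | h'
        · exact Or.inr h'
        · exfalso; linarith
    calc μ ({ω | θ ≤ (N2 i ω : ℝ) - (N1 i ω : ℝ)}ᶜ)
        ≤ μ ({ω | a1 ≤ (N1 i ω : ℝ)} ∪ {ω | (N2 i ω : ℝ) ≤ a2}) := measure_mono hsub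
      _ ≤ μ {ω | a1 ≤ (N1 i ω : ℝ)} + μ {ω | (N2 i ω : ℝ) ≤ a2} := measure_union_le _ _
      _ ≤ ENNReal.ofReal E + ENNReal.ofReal E := add_le_add (tail1 i) (tail2 i)
      _ = ENNReal.ofReal (2*E) := by rw [← ENNReal.ofReal_add hE0.le hE0.le]; ring_nf
  -- measurability
  have hmeas : ∀ i : Fin m2, MeasurableSet {ω | θ ≤ (N2 i ω : ℝ) - (N1 i ω : ℝ)} := by
    intro i
    apply measurableSet_le measurable_const
    exact (measurable_from_top.comp (hN2m i)).sub (measurable_from_top.comp (hN1m i))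
  have part1 : ∀ i : Fin m2,
      ENNReal.ofReal (1 - 2 * E) ≤ μ {ω | θ ≤ (N2 i ω : ℝ) - (N1 i ω : ℝ)} := by
    intro i
    exact prob_ge_of_compl_le (hmeas i) (by positivity) (bad i)
  refine ⟨part1, ?_⟩
  -- part 2
  have hset : {ω | ∀ i : Fin m2, θ ≤ (N2 i ω : ℝ) - (N1 i ω : ℝ)} =
      ⋂ i : Fin m2, {ω | θ ≤ (N2 i ω : ℝ) - (N1 i ω : ℝ)} := by
    ext ω; simp [Set.mem_iInter]
  have hmeas2 : MeasurableSet {ω | ∀ i : Fin m2, θ ≤ (N2 i ω : ℝ) - (N1 i ω : ℝ)} := by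
    rw [hset]; exact MeasurableSet.iInter (fun i => hmeas i)
  have hbad2 : μ ({ω | ∀ i : Fin m2, θ ≤ (N2 i ω : ℝ) - (N1 i ω : ℝ)}ᶜ) ≤
      ENNReal.ofReal ((1 + 2*ε) * (n:ℝ) * E) := by
    rw [hset, Set.compl_iInter]
    calc μ (⋃ i : Fin m2, {ω | θ ≤ (N2 i ω : ℝ) - (N1 i ω : ℝ)}ᶜ)
        ≤ ∑' i : Fin m2, μ ({ω | θ ≤ (N2 i ω : ℝ) - (N1 i ω : ℝ)}ᶜ) := measure_iUnion_le _
      _ ≤ ∑' i : Fin m2, ENNReal.ofReal (2*E) := ENNReal.tsum_le_tsum bad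
      _ = (m2 : ℝ≥0∞) * ENNReal.ofReal (2*E) := by
          rw [tsum_fintype]
          simp [Finset.sum_const, Finset.card_univ, nsmul_eq_mul]
      _ = ENNReal.ofReal ((m2:ℝ) * (2*E)) := by
          rw [ENNReal.ofReal_mul (by positivity : (0:ℝ) ≤ (m2:ℝ))]
          congr 1
          exact (ENNReal.ofReal_natCast m2).symm
      _ ≤ ENNReal.ofReal ((1 + 2*ε) * (n:ℝ) * E) := by
          apply ENNReal.ofReal_le_ofReal
          rw [hm2e]
          nlinarith [mul_nonneg (mul_nonneg hn0 hε0.le) hE0.le]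
  exact prob_ge_of_compl_le hmeas2 (by positivity) hbad2
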